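/- arXiv:0808.3959 — 2 statements merged into one kernel-verified Lean document; each statement's English description precedes it below -/
import Mathlib

section
/- Let G be a finite additive abelian group. Let v₁, v₂ : Ω → G be random variables, U₁, U₂ : Ω → G be independent uniform random variables with (U₁, U₂) independent of (v₁, v₂), and let f : G × G → G be any function (modeling the channel output estimate composed with channel randomness being deterministic). Define N = f(v₁ + U₁, v₂ + U₂) − (v₁ + U₁) − (v₂ + U₂). Then N is independent of (v₁, v₂). -/
/-!
Write `U = (U₁, U₂)` and `V = (v₁, v₂)`. By independence of `U₁, U₂`, `U` is uniform on
`G × G`, and since `U` is independent of `V`,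
`P(V + U = a, V = b) = P(U = a - b) P(V = b) = |G|⁻² P(V = b)`.
Summing over `b` shows `V + U` is uniform as well, so the joint law factors: the channel input
`V + U` is independent of the messages `V`, and the noise is a function of the channel input.
-/

open MeasureTheory ProbabilityTheory

namespace ProbabilityTheory

section

variable {Ω α β : Type*} [MeasurableSpace Ω] {μ : Measure Ω}

theorem indepFun_of_measure_inter_preimage_singleton [MeasurableSpace α] [MeasurableSpace β]
    [Countable α] [Countable β] [MeasurableSingletonClass α] [MeasurableSingletonClass β]
    [IsFiniteMeasure μ] {X : Ω → α} {Y : Ω → β} (hX : Measurable X) (hY : Measurable Y)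
    (h : ∀ a b, μ (X ⁻¹' {a} ∩ Y ⁻¹' {b}) = μ (X ⁻¹' {a}) * μ (Y ⁻¹' {b})) :
    IndepFun X Y μ := by
  rw [indepFun_iff_map_prod_eq_prod_map_map hX.aemeasurable hY.aemeasurable,
    Measure.ext_iff_singleton]
  rintro ⟨a, b⟩
  rw [← Set.singleton_prod_singleton, Measure.prod_prod,
    Measure.map_apply (hX.prodMk hY)
      ((measurableSet_singleton a).prod (measurableSet_singleton b)),
    Set.mk_preimage_prod, Measure.map_apply hX (measurableSet_singleton a),
    Measure.map_apply hY (measurableSet_singleton b), h]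

theorem IndepFun.measure_preimage_prodMk_singleton [MeasurableSpace α] [MeasurableSpace β]
    [MeasurableSingletonClass α] [MeasurableSingletonClass β] {X : Ω → α} {Y : Ω → β}
    (h : IndepFun X Y μ) (a : α) (b : β) :
    μ ((fun ω => (X ω, Y ω)) ⁻¹' {(a, b)}) = μ (X ⁻¹' {a}) * μ (Y ⁻¹' {b}) := by
  rw [← Set.singleton_prod_singleton, Set.mk_preimage_prod,
    h.measure_inter_preimage_eq_mul _ _ (measurableSet_singleton a) (measurableSet_singleton b)]

end

section

variable {Ω H : Type*} [MeasurableSpace Ω] {μ : Measure Ω} [AddGroup H] [MeasurableSpace H]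
  [DiscreteMeasurableSpace H] {U V : Ω → H}

theorem IndepFun.measure_add_preimage_singleton_inter (hUV : IndepFun U V μ) (a b : H) :
    μ ((V + U) ⁻¹' {a} ∩ V ⁻¹' {b}) = μ (U ⁻¹' {-b + a}) * μ (V ⁻¹' {b}) := by
  have hfiber : (V + U) ⁻¹' {a} ∩ V ⁻¹' {b} = U ⁻¹' {-b + a} ∩ V ⁻¹' {b} := by
    ext ω
    simp only [Set.mem_inter_iff, Set.mem_preimage, Set.mem_singleton_iff, Pi.add_apply]
    constructor
    · rintro ⟨hsum, rfl⟩
      exact ⟨eq_neg_add_iff_add_eq.mpr hsum, rfl⟩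
    · rintro ⟨hU, rfl⟩
      exact ⟨eq_neg_add_iff_add_eq.mp hU, rfl⟩
  rw [hfiber, hUV.measure_inter_preimage_eq_mul _ _ (measurableSet_singleton _)
    (measurableSet_singleton _)]

variable [Finite H] {c : ENNReal}

theorem IndepFun.measure_add_preimage_singleton_of_uniform [IsProbabilityMeasure μ]
    (hUV : IndepFun U V μ) (hV : Measurable V) (hU : ∀ g, μ (U ⁻¹' {g}) = c) (a : H) :
    μ ((V + U) ⁻¹' {a}) = c := by
  have := Fintype.ofFinite H
  calc μ ((V + U) ⁻¹' {a})
      = μ.restrict ((V + U) ⁻¹' {a}) (V ⁻¹' (Finset.univ : Finset H)) := by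
        rw [Finset.coe_univ, Set.preimage_univ, Measure.restrict_apply_univ]
    _ = ∑ b, μ ((V + U) ⁻¹' {a} ∩ V ⁻¹' {b}) := by
        rw [← sum_measure_preimage_singleton _ fun b _ => hV (measurableSet_singleton b)]
        refine Finset.sum_congr rfl fun b _ => ?_
        rw [Measure.restrict_apply (hV (measurableSet_singleton b)), Set.inter_comm]
    _ = c * ∑ b, μ (V ⁻¹' {b}) := by
        simp only [hUV.measure_add_preimage_singleton_inter, hU, Finset.mul_sum]
    _ = c := by
        rw [sum_measure_preimage_singleton _ fun b _ => hV (measurableSet_singleton b),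
          Finset.coe_univ, Set.preimage_univ, measure_univ, mul_one]

theorem IndepFun.indepFun_add_left_of_uniform [IsProbabilityMeasure μ] (hUV : IndepFun U V μ)
    (hU : Measurable U) (hV : Measurable V) (hUunif : ∀ g, μ (U ⁻¹' {g}) = c) :
    IndepFun (V + U) V μ := by
  refine indepFun_of_measure_inter_preimage_singleton (hV.add hU) hV fun a b => ?_
  rw [hUV.measure_add_preimage_singleton_inter,
    hUV.measure_add_preimage_singleton_of_uniform hV hUunif, hUunif]

end

end ProbabilityTheory

theorem noise_indep_of_messages {Ω G : Type*} [MeasurableSpace Ω] [AddCommGroup G] [Fintype G]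
    [MeasurableSpace G] [DiscreteMeasurableSpace G]
    (μ : Measure Ω) [IsProbabilityMeasure μ]
    (v₁ v₂ U₁ U₂ : Ω → G)
    (hv₁ : Measurable v₁) (hv₂ : Measurable v₂)
    (hU₁ : Measurable U₁) (hU₂ : Measurable U₂)
    (hUindep : IndepFun U₁ U₂ μ)
    (hU₁unif : ∀ g : G, μ (U₁ ⁻¹' {g}) = (Fintype.card G : ENNReal)⁻¹)
    (hU₂unif : ∀ g : G, μ (U₂ ⁻¹' {g}) = (Fintype.card G : ENNReal)⁻¹)
    (hUv : IndepFun (fun ω => (U₁ ω, U₂ ω)) (fun ω => (v₁ ω, v₂ ω)) μ)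
    (f : G × G → G) :
    IndepFun
      (fun ω => f (v₁ ω + U₁ ω, v₂ ω + U₂ ω) - (v₁ ω + U₁ ω) - (v₂ ω + U₂ ω))
      (fun ω => (v₁ ω, v₂ ω)) μ := by
  have hUunif : ∀ g : G × G, μ ((fun ω => (U₁ ω, U₂ ω)) ⁻¹' {g})
      = (Fintype.card G : ENNReal)⁻¹ * (Fintype.card G : ENNReal)⁻¹ := fun g => by
    rw [hUindep.measure_preimage_prodMk_singleton, hU₁unif, hU₂unif]
  have hXV := hUv.indepFun_add_left_of_uniform (hU₁.prodMk hU₂) (hv₁.prodMk hv₂) hUunif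
  exact hXV.comp (measurable_of_countable fun p : G × G => f p - p.1 - p.2) measurable_id
end

section
/- Let G be a finite additive abelian group, X : Ω → G a random variable independent of V : Ω → G with X uniform on G, and W : Ω → G any random variable independent of (V, X) (modeling channel noise). Then for any function g : G → G, the random variable N = g(X + W) − X is independent of V. -/
/-!
Since `W ⟂ (V, X)` and `X ⟂ V`, the joint law of `(W, X, V)` is the product of the three
marginals, so the pair `(W, X)` is independent of `V`; the noise `g (X + W) - X` is a function
of that pair.
-/

open MeasureTheory ProbabilityTheory

theorem ProbabilityTheory.IndepFun.prodMk_indepFun {Ω α β γ : Type*} [MeasurableSpace Ω]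
    [MeasurableSpace α] [MeasurableSpace β] [MeasurableSpace γ] {μ : Measure Ω}
    [IsFiniteMeasure μ] {A : Ω → α} {B : Ω → β} {C : Ω → γ}
    (hA : AEMeasurable A μ) (hB : AEMeasurable B μ) (hC : AEMeasurable C μ)
    (hABC : IndepFun A (fun ω => (B ω, C ω)) μ) (hBC : IndepFun B C μ) :
    IndepFun (fun ω => (A ω, B ω)) C μ := by
  have hAB : IndepFun A B μ := hABC.comp measurable_id measurable_fst
  rw [indepFun_iff_map_prod_eq_prod_map_map (hA.prodMk hB) hC]
  rw [indepFun_iff_map_prod_eq_prod_map_map hA (hB.prodMk hC)] at hABC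
  rw [indepFun_iff_map_prod_eq_prod_map_map hA hB] at hAB
  rw [indepFun_iff_map_prod_eq_prod_map_map hB hC] at hBC
  apply MeasurableEquiv.prodAssoc.map_measurableEquiv_injective
  calc (μ.map fun ω => ((A ω, B ω), C ω)).map MeasurableEquiv.prodAssoc
      = μ.map fun ω => (A ω, (B ω, C ω)) := by
        rw [AEMeasurable.map_map_of_aemeasurable MeasurableEquiv.prodAssoc.measurable.aemeasurable
          ((hA.prodMk hB).prodMk hC)]
        rfl
    _ = (((μ.map A).prod (μ.map B)).prod (μ.map C)).map MeasurableEquiv.prodAssoc := by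
        rw [hABC, hBC, Measure.prodAssoc_prod]
    _ = _ := by rw [hAB]

theorem noise_indep_with_channel_randomness_general {Ω G : Type*} [MeasurableSpace Ω]
    [AddCommGroup G] [Fintype G] [MeasurableSpace G] [DiscreteMeasurableSpace G]
    (μ : Measure Ω) [IsProbabilityMeasure μ]
    (V X W : Ω → G)
    (hV : Measurable V) (hX : Measurable X) (hW : Measurable W)
    (hXV : IndepFun X V μ)
    (hWVX : IndepFun W (fun ω => (V ω, X ω)) μ)
    (g : G → G) :
    IndepFun (fun ω => g (X ω + W ω) - X ω) V μ := by
  have hWX_V : IndepFun (fun ω => (W ω, X ω)) V μ :=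
    (hWVX.comp measurable_id measurable_swap).prodMk_indepFun
      hW.aemeasurable hX.aemeasurable hV.aemeasurable hXV
  exact hWX_V.comp (φ := fun p : G × G => g (p.2 + p.1) - p.2) (measurable_of_countable _)
    measurable_id

theorem noise_indep_with_channel_randomness {Ω G : Type*} [MeasurableSpace Ω]
    [AddCommGroup G] [Fintype G] [MeasurableSpace G] [DiscreteMeasurableSpace G]
    (μ : Measure Ω) [IsProbabilityMeasure μ]
    (V X W : Ω → G)
    (hV : Measurable V) (hX : Measurable X) (hW : Measurable W)
    (hXunif : ∀ g : G, μ (X ⁻¹' {g}) = (Fintype.card G : ENNReal)⁻¹)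
    (hXV : IndepFun X V μ)
    (hWVX : IndepFun W (fun ω => (V ω, X ω)) μ)
    (g : G → G) :
    IndepFun (fun ω => g (X ω + W ω) - X ω) V μ :=
  noise_indep_with_channel_randomness_general μ V X W hV hX hW hXV hWVX g
end
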